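/- arXiv:0908.2354 — 3 statements merged into one kernel-verified Lean document; each statement's English description precedes it below -/
import Mathlib

section
/- A convex compact set Ω in a finite-dimensional real vector space is a simplex if and only if every point of Ω has a unique representation as a convex combination of extreme points of Ω (with distinct extreme points and strictly positive coefficients). -/
/-!
Affine independence of a set `S` is equivalent to uniqueness of the representations of points as
convex combinations, with positive weights, of points of `S`: extending weights by zero reduces one
direction to the definition, and for the other Radon's theorem turns an affine dependence into a
point with two such representations on disjoint supports. The vertices of a simplex are its extreme
points, which gives the forward implication. Conversely, uniqueness makes the extreme points of `Ω`
affinely independent, hence finitely many in finite dimension, and by Krein–Milman `Ω` is their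
convex hull.
-/

/-- Ω is a simplex: the convex hull of an affinely independent finite set of points. -/
def IsSimplex {n : ℕ} (Ω : Set (EuclideanSpace ℝ (Fin n))) : Prop :=
  ∃ s : Finset (EuclideanSpace ℝ (Fin n)),
    AffineIndependent ℝ (fun x : s => (x : EuclideanSpace ℝ (Fin n))) ∧
    Ω = convexHull ℝ (s : Set (EuclideanSpace ℝ (Fin n)))

/-- x is represented by the convex combination with (distinct) points `t` and strictly
positive weights `w`, all points being extreme points of Ω. -/
def IsRep {n : ℕ} (Ω : Set (EuclideanSpace ℝ (Fin n))) (x : EuclideanSpace ℝ (Fin n))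
    (t : Finset (EuclideanSpace ℝ (Fin n))) (w : EuclideanSpace ℝ (Fin n) → ℝ) : Prop :=
  (t : Set (EuclideanSpace ℝ (Fin n))) ⊆ Set.extremePoints ℝ Ω ∧
  (∀ y ∈ t, 0 < w y) ∧ (∑ y ∈ t, w y) = 1 ∧ (∑ y ∈ t, w y • y) = x

open Finset

variable {k E : Type*} [Field k] [LinearOrder k] [AddCommGroup E] [Module k E]

variable (k) in
def IsPosConvexComb (t : Finset E) (w : E → k) (x : E) : Prop :=
  (∀ y ∈ t, 0 < w y) ∧ (∑ y ∈ t, w y) = 1 ∧ (∑ y ∈ t, w y • y) = x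

variable (k) in
def PosConvexCombUnique (S : Set E) : Prop :=
  ∀ ⦃x : E⦄ ⦃t₁ : Finset E⦄ ⦃w₁ : E → k⦄ ⦃t₂ : Finset E⦄ ⦃w₂ : E → k⦄,
    (t₁ : Set E) ⊆ S → (t₂ : Set E) ⊆ S → IsPosConvexComb k t₁ w₁ x → IsPosConvexComb k t₂ w₂ x →
      t₁ = t₂ ∧ ∀ y ∈ t₁, w₁ y = w₂ y

namespace IsPosConvexComb

variable {t : Finset E} {w : E → k} {x : E}

lemma nonempty (h : IsPosConvexComb k t w x) : t.Nonempty :=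
  nonempty_of_sum_ne_zero (h.2.1.symm ▸ one_ne_zero)

lemma mem_convexHull [IsStrictOrderedRing k] (h : IsPosConvexComb k t w x) :
    x ∈ convexHull k (t : Set E) :=
  Finset.mem_convexHull'.2 ⟨w, fun y hy => (h.1 y hy).le, h.2⟩

lemma indicator_ne_zero_iff (h : IsPosConvexComb k t w x) (y : E) :
    (t : Set E).indicator w y ≠ 0 ↔ y ∈ t := by
  by_cases hy : y ∈ t
  · simp [hy, (h.1 y hy).ne']
  · simp [hy]

end IsPosConvexComb

lemma AffineIndependent.posConvexCombUnique {S : Set E}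
    (hS : AffineIndependent k ((↑) : S → E)) : PosConvexCombUnique k S := by
  classical
  intro x t₁ w₁ t₂ w₂ ht₁ ht₂ h₁ h₂
  have hu : AffineIndependent k ((↑) : (t₁ ∪ t₂ : Finset E) → E) :=
    hS.mono (by rw [coe_union]; exact Set.union_subset ht₁ ht₂)
  have key := hu.eq_of_sum_eq_sum_subtype (w₁ := (t₁ : Set E).indicator w₁)
    (w₂ := (t₂ : Set E).indicator w₂)
    (by rw [sum_indicator_subset _ subset_union_left, sum_indicator_subset _ subset_union_right,
      h₁.2.1, h₂.2.1])
    (by rw [sum_indicator_subset_of_eq_zero w₁ (fun y a => a • y) subset_union_left (zero_smul k),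
          sum_indicator_subset_of_eq_zero w₂ (fun y a => a • y) subset_union_right (zero_smul k),
          h₁.2.2, h₂.2.2])
  have hmem : ∀ y, y ∈ t₁ ↔ y ∈ t₂ := fun y => by
    by_cases hy : y ∈ t₁ ∪ t₂
    · rw [← h₁.indicator_ne_zero_iff, ← h₂.indicator_ne_zero_iff, key y hy]
    · simp only [mem_union, not_or] at hy
      simp [hy]
  refine ⟨Finset.ext hmem, fun y hy => ?_⟩
  simpa [hy, (hmem y).1 hy] using key y (mem_union_left _ hy)

variable [IsStrictOrderedRing k]

lemma exists_posConvexComb_of_mem_convexHull {s : Finset E} {x : E}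
    (hx : x ∈ convexHull k (s : Set E)) : ∃ t ⊆ s, ∃ w, IsPosConvexComb k t w x := by
  classical
  obtain ⟨w, hw₀, hw₁, hwx⟩ := Finset.mem_convexHull'.1 hx
  refine ⟨s.filter (fun y => w y ≠ 0), filter_subset _ _, w, fun y hy => ?_, ?_, ?_⟩
  · obtain ⟨hys, hne⟩ := mem_filter.1 hy
    exact (hw₀ y hys).lt_of_ne' hne
  · rwa [sum_filter_ne_zero]
  · rw [sum_filter_of_ne (p := fun y => w y ≠ 0) fun y _ h hw => h (by rw [hw, zero_smul]), hwx]

lemma exists_posConvexComb_of_mem_convexHull_set {A : Set E} {x : E}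
    (hx : x ∈ convexHull k A) : ∃ t : Finset E, (t : Set E) ⊆ A ∧ ∃ w, IsPosConvexComb k t w x := by
  rw [convexHull_eq_union_convexHull_finite_subsets, Set.mem_iUnion₂] at hx
  obtain ⟨s, hsA, hxs⟩ := hx
  obtain ⟨t, hts, w, hw⟩ := exists_posConvexComb_of_mem_convexHull hxs
  exact ⟨t, (coe_subset.2 hts).trans hsA, w, hw⟩

lemma affineIndependent_of_posConvexCombUnique {S : Set E} (hS : PosConvexCombUnique k S) :
    AffineIndependent k ((↑) : S → E) := by
  by_contra hdep
  obtain ⟨I, x, hxI, hxIc⟩ := Convex.radon_partition hdep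
  obtain ⟨t₁, ht₁, w₁, h₁⟩ := exists_posConvexComb_of_mem_convexHull_set hxI
  obtain ⟨t₂, ht₂, w₂, h₂⟩ := exists_posConvexComb_of_mem_convexHull_set hxIc
  have hdisj : Disjoint ((↑) '' I : Set E) ((↑) '' Iᶜ) :=
    Set.disjoint_image_of_injective Subtype.val_injective disjoint_compl_right
  obtain ⟨y, hy⟩ := h₁.nonempty
  have hy₂ : y ∈ t₂ := (hS (ht₁.trans (Subtype.coe_image_subset S I))
    (ht₂.trans (Subtype.coe_image_subset S Iᶜ)) h₁ h₂).1 ▸ hy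
  exact hdisj.ne_of_mem (ht₁ hy) (ht₂ hy₂) rfl

lemma affineIndependent_iff_posConvexCombUnique {S : Set E} :
    AffineIndependent k ((↑) : S → E) ↔ PosConvexCombUnique k S :=
  ⟨AffineIndependent.posConvexCombUnique, affineIndependent_of_posConvexCombUnique⟩

lemma AffineIndependent.mem_extremePoints_convexHull {s : Finset E}
    (hs : AffineIndependent k ((↑) : s → E)) {x : E} (hx : x ∈ s) :
    x ∈ (convexHull k (s : Set E)).extremePoints k := by
  classical
  rw [mem_extremePoints_iff_left]
  refine ⟨subset_convexHull k _ hx, fun p hp q hq ⟨a, b, ha, hb, hab, hpq⟩ => ?_⟩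
  obtain ⟨u, hu₀, hu₁, rfl⟩ := Finset.mem_convexHull'.1 hp
  obtain ⟨v, hv₀, hv₁, rfl⟩ := Finset.mem_convexHull'.1 hq
  have key := hs.eq_of_sum_eq_sum_subtype (w₁ := fun y => a * u y + b * v y)
    (w₂ := Pi.single x 1)
    (by simp [sum_add_distrib, ← mul_sum, hu₁, hv₁, hab, hx])
    (by simp [add_smul, mul_smul, sum_add_distrib, ← smul_sum, hpq, Pi.single_apply, hx])
  have hu : ∀ y ∈ s, y ≠ x → u y = 0 := fun y hy hne => by
    have hy0 : a * u y + b * v y = 0 := by simpa [hne] using key y hy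
    rw [add_eq_zero_iff_of_nonneg (mul_nonneg ha.le (hu₀ y hy)) (mul_nonneg hb.le (hv₀ y hy)),
      mul_eq_zero, mul_eq_zero] at hy0
    exact hy0.1.resolve_left ha.ne'
  have hux : u x = 1 := by rwa [sum_eq_single_of_mem x hx hu] at hu₁
  rw [sum_eq_single_of_mem x hx fun y hy hne => by rw [hu y hy hne, zero_smul], hux, one_smul]

theorem simplex_iff_unique_decomposition_general {n : ℕ}
    (Ω : Set (EuclideanSpace ℝ (Fin n))) (hΩc : IsCompact Ω) (hΩcv : Convex ℝ Ω) :
    IsSimplex Ω ↔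
      ∀ x ∈ Ω,
        (∃ t w, IsRep Ω x t w) ∧
        (∀ t₁ w₁ t₂ w₂, IsRep Ω x t₁ w₁ → IsRep Ω x t₂ w₂ →
          t₁ = t₂ ∧ ∀ y ∈ t₁, w₁ y = w₂ y) := by
  constructor
  · rintro ⟨s, hs, rfl⟩ x hx
    obtain ⟨t, hts, w, hw⟩ := exists_posConvexComb_of_mem_convexHull hx
    refine ⟨⟨t, w, fun y hy => hs.mem_extremePoints_convexHull (hts hy), hw⟩,
      fun t₁ w₁ t₂ w₂ h₁ h₂ => ?_⟩
    exact affineIndependent_iff_posConvexCombUnique.1 hs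
      (h₁.1.trans extremePoints_convexHull_subset) (h₂.1.trans extremePoints_convexHull_subset)
      h₁.2 h₂.2
  · intro H
    have hunique : PosConvexCombUnique ℝ (Ω.extremePoints ℝ) :=
      fun x t₁ w₁ t₂ w₂ ht₁ ht₂ h₁ h₂ =>
        (H x (convexHull_min (ht₁.trans extremePoints_subset) hΩcv h₁.mem_convexHull)).2
          t₁ w₁ t₂ w₂ ⟨ht₁, h₁⟩ ⟨ht₂, h₂⟩
    have hind := affineIndependent_iff_posConvexCombUnique.2 hunique
    have hfin := finite_set_of_fin_dim_affineIndependent ℝ hind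
    refine ⟨hfin.toFinset, hind.mono (by simp), ?_⟩
    rw [hfin.coe_toFinset, ← (hfin.isClosed_convexHull ℝ).closure_eq,
      closure_convexHull_extremePoints hΩc hΩcv]

theorem simplex_iff_unique_decomposition {n : ℕ}
    (Ω : Set (EuclideanSpace ℝ (Fin n))) (hΩc : IsCompact Ω) (hΩcv : Convex ℝ Ω)
    (hne : Ω.Nonempty) :
    IsSimplex Ω ↔
      ∀ x ∈ Ω,
        (∃ t w, IsRep Ω x t w) ∧
        (∀ t₁ w₁ t₂ w₂, IsRep Ω x t₁ w₁ → IsRep Ω x t₂ w₂ →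
          t₁ = t₂ ∧ ∀ y ∈ t₁, w₁ y = w₂ y) :=
  simplex_iff_unique_decomposition_general Ω hΩc hΩcv
end

section
/- If A can be conclusively teleported through a copy of itself (i.e., there is a conclusive teleportation protocol with B = A), then A is weakly self-dual: there exists a linear order-isomorphism between A and A*. -/
structure ASS (V : Type*) [AddCommGroup V] [Module ℝ V] where
  pos : Set V
  add_mem : ∀ x ∈ pos, ∀ y ∈ pos, x + y ∈ pos
  smul_mem : ∀ (c : ℝ), 0 ≤ c → ∀ x ∈ pos, c • x ∈ pos
  generating : ∀ v : V, ∃ x ∈ pos, ∃ y ∈ pos, v = x - y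
  u : V →ₗ[ℝ] ℝ
  u_strict : ∀ x ∈ pos, x ≠ 0 → 0 < u x

variable {V W : Type*} [AddCommGroup V] [Module ℝ V] [AddCommGroup W] [Module ℝ W]

def dualCone (A : ASS V) : Set (Module.Dual ℝ V) := {f | ∀ x ∈ A.pos, 0 ≤ f x}

def stateSpace (A : ASS V) : Set V := {x ∈ A.pos | A.u x = 1}

/-- A conclusive teleportation protocol for A through B, described by the operator
f̂ : A → B* induced by the effect f ∈ (A ⊗_min B)*, the operator ω̂ : B* → A induced
by the state ω ∈ B ⊗_max A, and a positive norm-contractive correction map τ. -/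
def ConclusiveTeleportation (A : ASS V) (B : ASS W) : Prop :=
  ∃ (fh : V →ₗ[ℝ] Module.Dual ℝ W) (ωh : Module.Dual ℝ W →ₗ[ℝ] V) (τ : V →ₗ[ℝ] V),
    (∀ α ∈ A.pos, fh α ∈ dualCone B) ∧
    (∀ α ∈ A.pos, ∀ β ∈ B.pos, fh α β ≤ A.u α * B.u β) ∧
    (∀ b ∈ dualCone B, ωh b ∈ A.pos) ∧ A.u (ωh B.u) = 1 ∧
    (∀ α ∈ A.pos, τ α ∈ A.pos) ∧ (∀ α ∈ A.pos, A.u (τ α) ≤ A.u α) ∧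
    (∀ α ∈ stateSpace A,
      τ (ωh (fh α)) = (A.u (ωh (fh α))) • α ∧ 0 < A.u (ωh (fh α)))

/-- If A can be conclusively teleported through a copy of itself, then A is weakly
self-dual. -/
theorem weak_self_duality_of_self_teleportation
    [FiniteDimensional ℝ V] (A : ASS V)
    (h : ConclusiveTeleportation A A) :
    ∃ ψ : V ≃ₗ[ℝ] Module.Dual ℝ V, ψ '' A.pos = dualCone A := by
  obtain ⟨fh, ωh, τ, hfp, hfb, hωp, hωu, hτp, hτu, hmain⟩ := h
  -- every nonzero element of the cone normalizes to a state
  have hstate : ∀ x ∈ A.pos, x ≠ 0 → (A.u x)⁻¹ • x ∈ stateSpace A := by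
    intro x hx hx0
    have hu : 0 < A.u x := A.u_strict x hx hx0
    refine ⟨A.smul_mem _ (inv_nonneg.mpr hu.le) x hx, ?_⟩
    simp [map_smul, inv_mul_cancel₀ hu.ne']
  -- the composite τ ∘ ωh ∘ fh is a positive multiple of the identity
  obtain ⟨c, hc0, hL⟩ : ∃ c : ℝ, 0 < c ∧ ∀ v : V, τ (ωh (fh v)) = c • v := by
    by_cases hS : (stateSpace A).Nonempty
    · obtain ⟨α₀, hα₀⟩ := hS
      set c := A.u (ωh (fh α₀)) with hcdef
      refine ⟨c, (hmain α₀ hα₀).2, ?_⟩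
      clear_value c
      have hα₀ne : α₀ ≠ 0 := by
        intro h0
        have := hα₀.2
        rw [h0] at this
        simp at this
      -- the eigenvalue is the same on all states
      have hconst : ∀ β ∈ stateSpace A, A.u (ωh (fh β)) = c := by
        intro β hβ
        have hβne : β ≠ 0 := by
          intro h0
          have := hβ.2
          rw [h0] at this
          simp at this
        set cβ := A.u (ωh (fh β)) with hcβ
        -- midpoint state
        have hγ : (1/2 : ℝ) • (α₀ + β) ∈ stateSpace A := by
          refine ⟨A.smul_mem _ (by norm_num) _ (A.add_mem _ hα₀.1 _ hβ.1), ?_⟩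
          simp [map_smul, map_add, hα₀.2, hβ.2]
          norm_num
        set cγ := A.u (ωh (fh ((1/2 : ℝ) • (α₀ + β)))) with hcγ
        have heq : (1/2 : ℝ) • (c • α₀ + cβ • β) = cγ • ((1/2 : ℝ) • (α₀ + β)) := by
          have h1 := (hmain α₀ hα₀).1
          have h2 := (hmain β hβ).1
          have h3 := (hmain _ hγ).1
          calc (1/2 : ℝ) • (c • α₀ + cβ • β)
              = (1/2 : ℝ) • (τ (ωh (fh α₀)) + τ (ωh (fh β))) := by rw [h1, h2, hcdef]
            _ = τ (ωh (fh ((1/2 : ℝ) • (α₀ + β)))) := by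
                simp [map_add, map_smul]
            _ = cγ • ((1/2 : ℝ) • (α₀ + β)) := h3
        have heq2 : (c - cγ) • α₀ = (cγ - cβ) • β := by
          have := heq
          rw [smul_comm cγ] at this
          have h4 := smul_right_injective V (by norm_num : (1/2 : ℝ) ≠ 0) this
          linear_combination (norm := module) h4
        by_cases hcc : c = cγ
        · rw [hcc, sub_self, zero_smul] at heq2
          rcases smul_eq_zero.mp heq2.symm with h5 | h5
          · rw [hcc]; linarith [sub_eq_zero.mp h5]
          · exact absurd h5 hβne
        · have hαβ : α₀ = ((c - cγ)⁻¹ * (cγ - cβ)) • β := by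
            rw [mul_smul, ← heq2, inv_smul_smul₀ (sub_ne_zero.mpr hcc)]
          have hu := congrArg A.u hαβ
          rw [map_smul, hα₀.2, hβ.2, smul_eq_mul, mul_one] at hu
          rw [← hu, one_smul] at hαβ
          rw [hcβ, ← hαβ]
          exact hcdef.symm
      -- the scaling holds on the whole cone
      have hpos : ∀ x ∈ A.pos, τ (ωh (fh x)) = c • x := by
        intro x hx
        by_cases hx0 : x = 0
        · simp [hx0]
        · have hu : 0 < A.u x := A.u_strict x hx hx0
          have hst := hstate x hx hx0
          have h1 := (hmain _ hst).1
          rw [hconst _ hst] at h1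
          have := congrArg (fun v => (A.u x) • v) h1
          simp only [map_smul] at this
          rw [smul_inv_smul₀ hu.ne', smul_comm (A.u x) c, smul_inv_smul₀ hu.ne'] at this
          exact this
      intro v
      obtain ⟨x, hx, y, hy, rfl⟩ := A.generating v
      rw [map_sub, map_sub, map_sub, hpos x hx, hpos y hy, smul_sub]
    · -- degenerate case: the space is trivial
      have hz : ∀ v : V, v = 0 := by
        have hp0 : ∀ x ∈ A.pos, x = 0 := by
          intro x hx
          by_contra hx0
          exact hS ⟨_, hstate x hx hx0⟩
        intro v
        obtain ⟨x, hx, y, hy, rfl⟩ := A.generating v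
        rw [hp0 x hx, hp0 y hy, sub_self]
      exact ⟨1, one_pos, fun v => by rw [hz v]; simp⟩
  -- fh is injective, hence bijective
  have hinj : Function.Injective fh := by
    intro a b hab
    have h1 : c • a = c • b := by
      rw [← hL a, ← hL b, hab]
    exact smul_right_injective V hc0.ne' h1
  have hrank : Module.finrank ℝ V = Module.finrank ℝ (Module.Dual ℝ V) :=
    (Subspace.dual_finrank_eq (K := ℝ) (V := V)).symm
  refine ⟨fh.linearEquivOfInjective hinj hrank, Set.Subset.antisymm ?_ ?_⟩
  · rintro _ ⟨x, hx, rfl⟩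
    simpa [LinearMap.linearEquivOfInjective_apply] using hfp x hx
  · intro g hg
    obtain ⟨w, rfl⟩ := (fh.linearEquivOfInjective hinj hrank).surjective g
    simp only [LinearMap.linearEquivOfInjective_apply] at hg ⊢
    refine ⟨c⁻¹ • τ (ωh (fh w)), A.smul_mem _ (inv_nonneg.mpr hc0.le) _
      (hτp _ (hωp _ hg)), ?_⟩
    show fh (c⁻¹ • τ (ωh (fh w))) = fh w
    rw [map_smul, hL w, map_smul, inv_smul_smul₀ hc0.ne']
end

section
/- Let G be a finite group acting transitively on the pure states of A by order automorphisms preserving u_A, and let ω ∈ A ⊗_max A be a state such that ω̂ : A* → A is a G-equivariant order isomorphism. Define f̂_g = (1/|G|) ω̂⁻¹ ∘ g for g ∈ G. Then the effects f_g sum to the order unit u_{A⊗A} (so E = {f_g} is an observable), and (E, ω) is a deterministic teleportation protocol: each ω̂ ∘ f̂_g is physically invertible. -/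
open Set

/-- On a compact base of a closed cone, a linear map that is constant on extreme points
is constant. -/
lemma aux_const_on_base {E : Type*} [NormedAddCommGroup E] [NormedSpace ℝ E]
    [FiniteDimensional ℝ E]
    (C : Set E) (hCc : IsClosed C)
    (hadd : ∀ x ∈ C, ∀ y ∈ C, x + y ∈ C)
    (hsmul : ∀ (c : ℝ), 0 ≤ c → ∀ x ∈ C, c • x ∈ C)
    (u : E →ₗ[ℝ] ℝ) (hus : ∀ x ∈ C, x ≠ 0 → 0 < u x)
    (T : E →ₗ[ℝ] E)
    (hconst : ∀ p ∈ Set.extremePoints ℝ {x ∈ C | u x = 1},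
      ∀ q ∈ Set.extremePoints ℝ {x ∈ C | u x = 1}, T p = T q)
    {e : E} (he : e ∈ {x ∈ C | u x = 1}) :
    ∀ s ∈ {x ∈ C | u x = 1}, T s = T e := by
  set K : Set E := {x ∈ C | u x = 1} with hK
  have hu_cont : Continuous u := u.continuous_of_finiteDimensional
  have hKclosed : IsClosed K := by
    have : K = C ∩ u ⁻¹' {1} := by ext x; simp [hK, Set.mem_preimage]
    rw [this]
    exact hCc.inter (isClosed_singleton.preimage hu_cont)
  have hKconv : Convex ℝ K := by
    intro x hx y hy a b ha hb hab
    refine ⟨?_, ?_⟩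
    · exact hadd _ (hsmul a ha x hx.1) _ (hsmul b hb y hy.1)
    · simp [map_add, map_smul, hx.2, hy.2, hab]
  have he0 : e ≠ 0 := fun h => one_ne_zero (by rw [← he.2, h, map_zero])
  -- boundedness
  have hKb : Bornology.IsBounded K := by
    set S : Set E := C ∩ Metric.sphere (0 : E) 1 with hS
    have hScomp : IsCompact S := (isCompact_sphere (0 : E) 1).inter_left hCc
    have hSne : S.Nonempty := by
      refine ⟨‖e‖⁻¹ • e, hsmul _ (inv_nonneg.2 (norm_nonneg e)) e he.1, ?_⟩
      rw [mem_sphere_zero_iff_norm, norm_smul, norm_inv, norm_norm]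
      exact inv_mul_cancel₀ (norm_ne_zero_iff.2 he0)
    obtain ⟨y, hyS, hymin⟩ := hScomp.exists_isMinOn hSne hu_cont.continuousOn
    have hy0 : y ≠ 0 := by
      intro h
      have := hyS.2
      rw [h, mem_sphere_zero_iff_norm, norm_zero] at this
      norm_num at this
    have hm : 0 < u y := hus y hyS.1 hy0
    have hsub : K ⊆ Metric.closedBall (0 : E) (u y)⁻¹ := by
      intro x hx
      have hx0 : x ≠ 0 := fun h => one_ne_zero (by rw [← hx.2, h, map_zero])
      have hxn : (0 : ℝ) < ‖x‖ := norm_pos_iff.2 hx0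
      have hz : ‖x‖⁻¹ • x ∈ S := by
        refine ⟨hsmul _ (inv_nonneg.2 (norm_nonneg x)) x hx.1, ?_⟩
        rw [mem_sphere_zero_iff_norm, norm_smul, norm_inv, norm_norm]
        exact inv_mul_cancel₀ hxn.ne'
      have := hymin hz
      have huz : u (‖x‖⁻¹ • x) = ‖x‖⁻¹ := by
        rw [map_smul, smul_eq_mul, hx.2, mul_one]
      rw [Metric.mem_closedBall, dist_zero_right]
      have h1 : u y ≤ ‖x‖⁻¹ := by simpa [huz] using this
      calc ‖x‖ = (‖x‖⁻¹)⁻¹ := (inv_inv _).symm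
        _ ≤ (u y)⁻¹ := by
            apply inv_anti₀ hm h1
    exact Metric.isBounded_closedBall.subset hsub
  have hKcomp : IsCompact K := Metric.isCompact_of_isClosed_isBounded hKclosed hKb
  obtain ⟨p₀, hp₀⟩ := hKcomp.extremePoints_nonempty ⟨e, he⟩
  have hT_cont : Continuous T := T.continuous_of_finiteDimensional
  set D : Set E := {x | T x = T p₀} with hD
  have hDclosed : IsClosed D := isClosed_eq hT_cont continuous_const
  have hDconv : Convex ℝ D := by
    intro x hx y hy a b ha hb hab
    simp only [hD, Set.mem_setOf_eq] at *
    rw [map_add, map_smul, map_smul, hx, hy, ← add_smul, hab, one_smul]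
  have hsubD : K ⊆ D := by
    rw [← closure_convexHull_extremePoints hKcomp hKconv]
    refine closure_minimal (convexHull_min ?_ hDconv) hDclosed
    intro q hq
    exact hconst q hq p₀ hp₀
  intro s hs
  rw [hsubD hs, (hsubD he : T e = T p₀)]



variable {V : Type*} [AddCommGroup V] [Module ℝ V]

/-- Group-covariant deterministic teleportation: if a finite group G acts transitively
on the pure states of A by order automorphisms preserving u_A, and ω̂ : A* → A is a
G-equivariant order isomorphism coming from a state ω, then the effects
f̂_g = (1/|G|) ω̂⁻¹ ∘ g form an observable (they are positive and sum to the order unit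
u_{A⊗A}, which corresponds to the operator α ↦ u_A(α) • u_A), and each ω̂ ∘ f̂_g is
physically invertible, i.e. (E, ω) is a deterministic teleportation protocol. -/
theorem group_covariant_deterministic_teleportation
    [FiniteDimensional ℝ V] {G : Type*} [Group G] [Fintype G]
    (A : ASS V) (ρ : G →* (V ≃ₗ[ℝ] V))
    (hpos : ∀ g : G, (ρ g) '' A.pos = A.pos)
    (hu : ∀ (g : G) (x : V), A.u (ρ g x) = A.u x)
    (htrans : ∀ α ∈ Set.extremePoints ℝ (stateSpace A),
      ∀ β ∈ Set.extremePoints ℝ (stateSpace A), ∃ g : G, ρ g α = β)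
    (ωh : Module.Dual ℝ V ≃ₗ[ℝ] V)
    (hωpos : ωh '' dualCone A = A.pos)
    (hωnorm : A.u (ωh A.u) = 1)
    (hequiv : ∀ (g : G) (a : Module.Dual ℝ V),
      ωh ((ρ g⁻¹).toLinearMap.dualMap a) = ρ g (ωh a))
    (fh : G → (V →ₗ[ℝ] Module.Dual ℝ V))
    (hfh : fh = fun g => ((Fintype.card G : ℝ)⁻¹) •
      (ωh.symm.toLinearMap ∘ₗ (ρ g).toLinearMap)) :
    -- each f_g is positive (an effect)
    (∀ g : G, ∀ α ∈ A.pos, fh g α ∈ dualCone A) ∧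
    -- the f_g sum to the order unit of A ⊗ A, so E = {f_g} is an observable
    (∑ g : G, fh g) = LinearMap.smulRight A.u A.u ∧
    -- each ω̂ ∘ f̂_g is physically invertible: deterministic teleportation
    (∀ g : G, ∃ σ : V →ₗ[ℝ] V,
      (∀ x ∈ A.pos, σ x ∈ A.pos) ∧ (∀ x ∈ A.pos, A.u (σ x) ≤ A.u x) ∧
      ∃ c : ℝ, 0 < c ∧ σ ∘ₗ (ωh.toLinearMap ∘ₗ fh g) = c • LinearMap.id) := by
  
  classical
  have hcardpos : (0:ℝ) < Fintype.card G := by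
    exact_mod_cast Fintype.card_pos
  have hcard0 : (Fintype.card G : ℝ) ≠ 0 := hcardpos.ne'
  have huD : A.u ∈ dualCone A := by
    intro x hx
    rcases eq_or_ne x 0 with rfl | h
    · simp
    · exact (A.u_strict x hx h).le
  set e : V := ωh A.u with he_def
  have heC : e ∈ A.pos := by rw [← hωpos]; exact ⟨A.u, huD, rfl⟩
  have hesymm : ωh.symm e = A.u := ωh.symm_apply_apply A.u
  have hefix : ∀ g : G, ρ g e = e := by
    intro g
    have h1 : (ρ g⁻¹).toLinearMap.dualMap A.u = A.u := by
      apply LinearMap.ext; intro x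
      simpa using hu g⁻¹ x
    rw [← hequiv g A.u, h1]
  have heK : e ∈ stateSpace A := ⟨heC, hωnorm⟩
  have hinvpos : ∀ x ∈ A.pos, ωh.symm x ∈ dualCone A := by
    intro x hx
    rw [← hωpos] at hx
    obtain ⟨f, hf, rfl⟩ := hx
    rwa [ωh.symm_apply_apply]
  have hgpos : ∀ (g : G), ∀ x ∈ A.pos, ρ g x ∈ A.pos := by
    intro g x hx; rw [← hpos g]; exact ⟨x, hx, rfl⟩
  set T : V →ₗ[ℝ] V := ∑ g : G, (ρ g).toLinearMap with hT
  have hTapp : ∀ v : V, T v = ∑ g : G, ρ g v := by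
    intro v; rw [hT]; simp [LinearMap.sum_apply]
  have hTe : T e = (Fintype.card G : ℝ) • e := by
    rw [hTapp]
    simp only [hefix]
    rw [Finset.sum_const, Finset.card_univ, Nat.cast_smul_eq_nsmul ℝ]
  have hTinv : ∀ (g : G) (v : V), T (ρ g v) = T v := by
    intro g v
    have step : ∀ h : G, ρ h (ρ g v) = ρ (h * g) v := by
      intro h; rw [map_mul]; rfl
    calc T (ρ g v) = ∑ h : G, ρ (h * g) v := by
          rw [hTapp]; exact Finset.sum_congr rfl fun h _ => step h
      _ = ∑ h : G, ρ h v :=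
          Fintype.sum_equiv (Equiv.mulRight g) _ _ (fun h => rfl)
      _ = T v := (hTapp v).symm
  -- transfer to a normed model
  set n := Module.finrank ℝ V with hn
  set φ : V ≃ₗ[ℝ] (Fin n → ℝ) := (Module.finBasis ℝ V).equivFun with hφ
  set C : Set (Fin n → ℝ) := φ '' A.pos with hC
  set u' : (Fin n → ℝ) →ₗ[ℝ] ℝ := A.u ∘ₗ (φ.symm : (Fin n → ℝ) →ₗ[ℝ] V) with hu'
  set T' : (Fin n → ℝ) →ₗ[ℝ] (Fin n → ℝ) :=
    (φ : V →ₗ[ℝ] (Fin n → ℝ)) ∘ₗ T ∘ₗ (φ.symm : (Fin n → ℝ) →ₗ[ℝ] V) with hT'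
  have hCclosed : IsClosed C := by
    have hCeq : C = ⋂ x ∈ A.pos, {z : Fin n → ℝ | 0 ≤ ωh.symm (φ.symm z) x} := by
      ext z
      simp only [Set.mem_iInter, Set.mem_setOf_eq, hC]
      constructor
      · rintro ⟨v, hv, rfl⟩ x hx
        rw [φ.symm_apply_apply]
        exact hinvpos v hv x hx
      · intro h
        refine ⟨φ.symm z, ?_, φ.apply_symm_apply z⟩
        rw [← hωpos]
        exact ⟨ωh.symm (φ.symm z), fun x hx => h x hx, ωh.apply_symm_apply _⟩
    rw [hCeq]
    refine isClosed_iInter fun x => isClosed_iInter fun _ => ?_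
    let m : (Fin n → ℝ) →ₗ[ℝ] ℝ :=
      { toFun := fun z => ωh.symm (φ.symm z) x
        map_add' := by intro a b; simp
        map_smul' := by intro c a; simp }
    exact isClosed_le continuous_const m.continuous_of_finiteDimensional
  have hCadd : ∀ x ∈ C, ∀ y ∈ C, x + y ∈ C := by
    rintro _ ⟨a, ha, rfl⟩ _ ⟨b, hb, rfl⟩
    exact ⟨a + b, A.add_mem a ha b hb, map_add φ a b⟩
  have hCsmul : ∀ (c : ℝ), 0 ≤ c → ∀ x ∈ C, c • x ∈ C := by
    rintro c hc _ ⟨a, ha, rfl⟩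
    exact ⟨c • a, A.smul_mem c hc a ha, map_smul φ c a⟩
  have hCstrict : ∀ x ∈ C, x ≠ 0 → 0 < u' x := by
    rintro _ ⟨a, ha, rfl⟩ hne
    have ha0 : a ≠ 0 := by rintro rfl; simp at hne
    have : u' (φ a) = A.u a := by
      simp [hu', φ.symm_apply_apply]
    rw [this]
    exact A.u_strict a ha ha0
  have hK' : {x ∈ C | u' x = 1} = φ '' stateSpace A := by
    ext z
    constructor
    · rintro ⟨⟨x, hx, rfl⟩, h1⟩
      refine ⟨x, ⟨hx, ?_⟩, rfl⟩
      simpa [hu', φ.symm_apply_apply] using h1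
    · rintro ⟨x, ⟨hx1, hx2⟩, rfl⟩
      exact ⟨⟨x, hx1, rfl⟩, by simp [hu', φ.symm_apply_apply, hx2]⟩
  have hconst' : ∀ p ∈ Set.extremePoints ℝ {x ∈ C | u' x = 1},
      ∀ q ∈ Set.extremePoints ℝ {x ∈ C | u' x = 1}, T' p = T' q := by
    have hext : Set.extremePoints ℝ {x ∈ C | u' x = 1}
        = φ '' Set.extremePoints ℝ (stateSpace A) := by
      rw [hK', image_extremePoints]
    intro p hp q hq
    rw [hext] at hp hq
    obtain ⟨α, hα, rfl⟩ := hp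
    obtain ⟨β, hβ, rfl⟩ := hq
    obtain ⟨g, hg⟩ := htrans α hα β hβ
    have hTβ : T β = T α := by rw [← hg]; exact hTinv g α
    simp [hT', φ.symm_apply_apply, hTβ]
  have heK' : φ e ∈ {x ∈ C | u' x = 1} := by
    rw [hK']; exact ⟨e, heK, rfl⟩
  have hmain := aux_const_on_base C hCclosed hCadd hCsmul u' hCstrict T' hconst' heK'
  have hstate : ∀ s ∈ stateSpace A, T s = (Fintype.card G : ℝ) • e := by
    intro s hs
    have h1 := hmain (φ s) (by rw [hK']; exact ⟨s, hs, rfl⟩)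
    have h2 : φ (T s) = φ (T e) := by
      simpa [hT', φ.symm_apply_apply] using h1
    rw [φ.injective h2, hTe]
  have hpos_key : ∀ α ∈ A.pos, T α = ((Fintype.card G : ℝ) * A.u α) • e := by
    intro α hα
    rcases eq_or_ne α 0 with rfl | hne
    · simp
    · have hupos : 0 < A.u α := A.u_strict α hα hne
      have hs : (A.u α)⁻¹ • α ∈ stateSpace A :=
        ⟨A.smul_mem _ (inv_nonneg.2 hupos.le) α hα, by
          rw [map_smul, smul_eq_mul, inv_mul_cancel₀ hupos.ne']⟩
      have h1 := hstate _ hs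
      rw [map_smul] at h1
      have h3 : T α = A.u α • ((Fintype.card G : ℝ) • e) := by
        calc T α = A.u α • ((A.u α)⁻¹ • T α) := by
              rw [smul_smul, mul_inv_cancel₀ hupos.ne', one_smul]
          _ = A.u α • ((Fintype.card G : ℝ) • e) := by rw [h1]
      rw [h3, smul_smul, mul_comm]
  have hkey : ∀ v : V, T v = ((Fintype.card G : ℝ) * A.u v) • e := by
    intro v
    obtain ⟨x, hx, y, hy, rfl⟩ := A.generating v
    rw [map_sub, hpos_key x hx, hpos_key y hy, map_sub, mul_sub, sub_smul]
  refine ⟨?_, ?_, ?_⟩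
  · intro g α hα x hx
    rw [hfh]
    simp only [LinearMap.smul_apply, LinearMap.coe_comp, Function.comp_apply,
      LinearEquiv.coe_coe, LinearEquiv.coe_toLinearMap, smul_eq_mul]
    refine mul_nonneg (inv_nonneg.2 hcardpos.le) ?_
    exact hinvpos _ (hgpos g α hα) x hx
  · apply LinearMap.ext; intro v
    have h1 : (∑ g : G, fh g) v = (Fintype.card G : ℝ)⁻¹ • ωh.symm (T v) := by
      rw [hfh]
      simp only [LinearMap.sum_apply, LinearMap.smul_apply, LinearMap.coe_comp,
        Function.comp_apply, LinearEquiv.coe_coe, LinearEquiv.coe_toLinearMap]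
      rw [← Finset.smul_sum, ← map_sum, ← hTapp]
    rw [h1, hkey, map_smul, hesymm, smul_smul, LinearMap.smulRight_apply]
    rw [inv_mul_cancel_left₀ hcard0]
  · intro g
    refine ⟨(ρ g⁻¹).toLinearMap, fun x hx => hgpos g⁻¹ x hx,
      fun x hx => le_of_eq (hu g⁻¹ x), (Fintype.card G : ℝ)⁻¹,
      inv_pos.2 hcardpos, ?_⟩
    apply LinearMap.ext; intro x
    have hinv : (ρ g⁻¹) ((ρ g) x) = x := by
      have h2 : (ρ g⁻¹) ((ρ g) x) = (ρ (g⁻¹ * g)) x := by rw [map_mul]; rfl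
      rw [h2, inv_mul_cancel, map_one]; rfl
    rw [hfh]
    simp only [LinearMap.coe_comp, Function.comp_apply, LinearEquiv.coe_coe,
      LinearEquiv.coe_toLinearMap, LinearMap.smul_apply, LinearMap.id_coe, id_eq]
    rw [map_smul, ωh.apply_symm_apply, map_smul, hinv]
end
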